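/- arXiv:2502.00119 — 7 statements merged into one kernel-verified Lean document; each statement's English description precedes it below -/
import Mathlib

section
/- Let H be a real Hilbert space, F : H → H monotone and L-Lipschitz with L > 0, and γ ∈ (0, 1/L). Let z ∈ H, z̄ ∈ H, z⁺ ∈ H be arbitrary points and define V(z, z̄, z⁺) = (2/γ)⟨z - z⁺, F z - F z̄⟩ + (1/γ²)‖z⁺ - z̄‖² + (1/γ²)‖z - z⁺‖². Then V(z, z̄, z⁺) ≥ ((1 - γL)/γ²)(‖z⁺ - z̄‖² + ‖z⁺ - z‖²) ≥ 0. -/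
open scoped RealInnerProductSpace

noncomputable def lyapV {H : Type*} [NormedAddCommGroup H] [InnerProductSpace ℝ H]
    (F : H → H) (γ : ℝ) (z zb zp : H) : ℝ :=
  (2 / γ) * ⟪z - zp, F z - F zb⟫ + (1 / γ ^ 2) * ‖zp - zb‖ ^ 2 + (1 / γ ^ 2) * ‖z - zp‖ ^ 2

/-!
Split `F z - F z̄ = (F z - F z⁺) + (F z⁺ - F z̄)`: the first pairing with `z - z⁺` is nonnegative by
monotonicity, the second is at least `-L ‖z - z⁺‖ ‖z⁺ - z̄‖` by Cauchy–Schwarz and the Lipschitz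
bound, and AM–GM turns this into `-(L/2) (‖z⁺ - z̄‖² + ‖z - z⁺‖²)`. Multiplied by `2/γ`, this eats
a `γL` fraction of the two square terms of `V`.
-/

section

variable {H : Type*} [NormedAddCommGroup H] [InnerProductSpace ℝ H] {F : H → H} {L : ℝ}

theorem neg_lipschitz_mul_le_inner_sub_apply
    (hmono : ∀ x y : H, 0 ≤ ⟪F x - F y, x - y⟫) (hlip : ∀ x y : H, ‖F x - F y‖ ≤ L * ‖x - y‖)
    (z zb zp : H) : -(L * ‖z - zp‖ * ‖zp - zb‖) ≤ ⟪z - zp, F z - F zb⟫ := by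
  have hsplit : ⟪z - zp, F z - F zb⟫ = ⟪z - zp, F z - F zp⟫ + ⟪z - zp, F zp - F zb⟫ := by
    rw [← inner_add_right, sub_add_sub_cancel]
  have hmon : 0 ≤ ⟪z - zp, F z - F zp⟫ := real_inner_comm (z - zp) _ ▸ hmono z zp
  have hcs : -(‖z - zp‖ * ‖F zp - F zb‖) ≤ ⟪z - zp, F zp - F zb⟫ :=
    neg_le_of_abs_le (abs_real_inner_le_norm _ _)
  have hF : ‖z - zp‖ * ‖F zp - F zb‖ ≤ ‖z - zp‖ * (L * ‖zp - zb‖) :=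
    mul_le_mul_of_nonneg_left (hlip zp zb) (norm_nonneg _)
  linarith

theorem neg_half_lipschitz_mul_le_inner_sub_apply (hL : 0 ≤ L)
    (hmono : ∀ x y : H, 0 ≤ ⟪F x - F y, x - y⟫) (hlip : ∀ x y : H, ‖F x - F y‖ ≤ L * ‖x - y‖)
    (z zb zp : H) : -(L / 2) * (‖zp - zb‖ ^ 2 + ‖z - zp‖ ^ 2) ≤ ⟪z - zp, F z - F zb⟫ := by
  have hamgm : L * ‖z - zp‖ * ‖zp - zb‖ ≤ L / 2 * (‖zp - zb‖ ^ 2 + ‖z - zp‖ ^ 2) := by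
    nlinarith [mul_nonneg hL (sq_nonneg (‖z - zp‖ - ‖zp - zb‖))]
  linarith [neg_lipschitz_mul_le_inner_sub_apply hmono hlip z zb zp]

theorem lyapV_lower_bound {γ : ℝ} (hL : 0 ≤ L) (hγ : 0 < γ)
    (hmono : ∀ x y : H, 0 ≤ ⟪F x - F y, x - y⟫) (hlip : ∀ x y : H, ‖F x - F y‖ ≤ L * ‖x - y‖)
    (z zb zp : H) :
    ((1 - γ * L) / γ ^ 2) * (‖zp - zb‖ ^ 2 + ‖zp - z‖ ^ 2) ≤ lyapV F γ z zb zp := by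
  have hinner := mul_le_mul_of_nonneg_left
    (neg_half_lipschitz_mul_le_inner_sub_apply hL hmono hlip z zb zp) (by positivity : 0 ≤ 2 / γ)
  have hexpand : ((1 - γ * L) / γ ^ 2) * (‖zp - zb‖ ^ 2 + ‖z - zp‖ ^ 2) =
      (2 / γ) * (-(L / 2) * (‖zp - zb‖ ^ 2 + ‖z - zp‖ ^ 2)) +
        (1 / γ ^ 2) * ‖zp - zb‖ ^ 2 + (1 / γ ^ 2) * ‖z - zp‖ ^ 2 := by
    field_simp
    ring
  rw [norm_sub_rev zp z, lyapV]
  linarith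

end

theorem stmt0_general {H : Type*} [NormedAddCommGroup H] [InnerProductSpace ℝ H]
    (F : H → H) (L γ : ℝ)
    (hmono : ∀ x y : H, 0 ≤ ⟪F x - F y, x - y⟫)
    (hlip : ∀ x y : H, ‖F x - F y‖ ≤ L * ‖x - y‖)
    (hγ0 : 0 < γ) (hγ1 : γ < 1 / L) (z zb zp : H) :
    ((1 - γ * L) / γ ^ 2) * (‖zp - zb‖ ^ 2 + ‖zp - z‖ ^ 2) ≤ lyapV F γ z zb zp ∧
      0 ≤ ((1 - γ * L) / γ ^ 2) * (‖zp - zb‖ ^ 2 + ‖zp - z‖ ^ 2) := by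
  have hL : 0 < L := one_div_pos.mp (hγ0.trans hγ1)
  have hγL : γ * L < 1 := (lt_div_iff₀ hL).mp hγ1
  refine ⟨lyapV_lower_bound hL.le hγ0 hmono hlip z zb zp, ?_⟩
  have hcoef : 0 ≤ (1 - γ * L) / γ ^ 2 := div_nonneg (by linarith) (by positivity)
  positivity

theorem stmt0 {H : Type*} [NormedAddCommGroup H] [InnerProductSpace ℝ H] [CompleteSpace H]
    (F : H → H) (L γ : ℝ) (hL : 0 < L)
    (hmono : ∀ x y : H, 0 ≤ ⟪F x - F y, x - y⟫)
    (hlip : ∀ x y : H, ‖F x - F y‖ ≤ L * ‖x - y‖)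
    (hγ0 : 0 < γ) (hγ1 : γ < 1 / L) (z zb zp : H) :
    ((1 - γ * L) / γ ^ 2) * (‖zp - zb‖ ^ 2 + ‖zp - z‖ ^ 2) ≤ lyapV F γ z zb zp ∧
      0 ≤ ((1 - γ * L) / γ ^ 2) * (‖zp - zb‖ ^ 2 + ‖zp - z‖ ^ 2) :=
  stmt0_general F L γ hmono hlip hγ0 hγ1 z zb zp
end

section
/- Let F : H → H be monotone and L-Lipschitz on a real Hilbert space H, γ > 0, and consider the extragradient iteration z̄ᵏ = zᵏ - γ F(zᵏ), zᵏ⁺¹ = zᵏ - γ F(z̄ᵏ). Then for each k, ‖F(zᵏ⁺¹)‖² ≤ ‖F(zᵏ)‖² - (1 - γ²L²)‖F(zᵏ) - F(z̄ᵏ)‖². -/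
/-! Along an extragradient step, `z⁺ - z = -γ F(z̄)` and `z⁺ - z̄ = γ (F z - F z̄)`. Monotonicity on
the first displacement gives `⟪F z⁺ - F z, F z̄⟫ ≤ 0`, Lipschitz continuity on the second gives
`‖F z⁺ - F z̄‖ ≤ γL ‖F z - F z̄‖`, and the identity
`‖a‖² - ‖b‖² = 2⟪a - b, c⟫ + ‖a - c‖² - ‖b - c‖²` combines the two. -/

open scoped RealInnerProductSpace

section ExtragradientStep

variable {H : Type*} [NormedAddCommGroup H] [InnerProductSpace ℝ H]

theorem norm_sq_sub_norm_sq_eq (a b c : H) :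
    ‖a‖ ^ 2 - ‖b‖ ^ 2 = 2 * ⟪a - b, c⟫ + ‖a - c‖ ^ 2 - ‖b - c‖ ^ 2 := by
  rw [norm_sub_sq_real, norm_sub_sq_real, inner_sub_left]
  ring

theorem norm_sq_le_of_inner_sub_nonpos_of_norm_sub_le {a b c : H} {M : ℝ}
    (hinner : ⟪a - b, c⟫ ≤ 0) (hnorm : ‖a - c‖ ≤ M * ‖b - c‖) :
    ‖a‖ ^ 2 ≤ ‖b‖ ^ 2 - (1 - M ^ 2) * ‖b - c‖ ^ 2 := by
  have hsq : ‖a - c‖ ^ 2 ≤ M ^ 2 * ‖b - c‖ ^ 2 := by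
    rw [← mul_pow]
    exact pow_le_pow_left₀ (norm_nonneg _) hnorm 2
  linarith [norm_sq_sub_norm_sq_eq a b c]

variable {F : H → H} {γ : ℝ} {z zb z' : H}

theorem inner_sub_nonpos_of_extragradient_step (hmono : ∀ x y : H, 0 ≤ ⟪F x - F y, x - y⟫)
    (hγ : 0 < γ) (hz' : z' = z - γ • F zb) :
    ⟪F z' - F z, F zb⟫ ≤ 0 := by
  have hstep : z' - z = -(γ • F zb) := by rw [hz']; abel
  have h := hmono z' z
  rw [hstep, inner_neg_right, real_inner_smul_right, neg_nonneg] at h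
  exact nonpos_of_mul_nonpos_right h hγ

theorem norm_sub_le_of_extragradient_step {L : ℝ} (hlip : ∀ x y : H, ‖F x - F y‖ ≤ L * ‖x - y‖)
    (hγ : 0 < γ) (hzb : zb = z - γ • F z) (hz' : z' = z - γ • F zb) :
    ‖F z' - F zb‖ ≤ γ * L * ‖F z - F zb‖ := by
  have hstep : z' - zb = γ • (F z - F zb) := by rw [hz', hzb, smul_sub]; abel
  calc ‖F z' - F zb‖ ≤ L * ‖z' - zb‖ := hlip z' zb
    _ = γ * L * ‖F z - F zb‖ := by
      rw [hstep, norm_smul, Real.norm_of_nonneg hγ.le]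
      ring

end ExtragradientStep

theorem stmt1_general {H : Type*} [NormedAddCommGroup H] [InnerProductSpace ℝ H]
    (F : H → H) (L γ : ℝ)
    (hmono : ∀ x y : H, 0 ≤ ⟪F x - F y, x - y⟫)
    (hlip : ∀ x y : H, ‖F x - F y‖ ≤ L * ‖x - y‖)
    (hγ : 0 < γ) (z zb : ℕ → H)
    (hzb : ∀ k, zb k = z k - γ • F (z k))
    (hz : ∀ k, z (k + 1) = z k - γ • F (zb k)) :
    ∀ k : ℕ,
      ‖F (z (k + 1))‖ ^ 2 ≤ ‖F (z k)‖ ^ 2 - (1 - γ ^ 2 * L ^ 2) * ‖F (z k) - F (zb k)‖ ^ 2 := by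
  intro k
  rw [← mul_pow]
  exact norm_sq_le_of_inner_sub_nonpos_of_norm_sub_le
    (inner_sub_nonpos_of_extragradient_step hmono hγ (hz k))
    (norm_sub_le_of_extragradient_step hlip hγ (hzb k) (hz k))

theorem stmt1 {H : Type*} [NormedAddCommGroup H] [InnerProductSpace ℝ H] [CompleteSpace H]
    (F : H → H) (L γ : ℝ) (hL : 0 < L)
    (hmono : ∀ x y : H, 0 ≤ ⟪F x - F y, x - y⟫)
    (hlip : ∀ x y : H, ‖F x - F y‖ ≤ L * ‖x - y‖)
    (hγ : 0 < γ) (z zb : ℕ → H)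
    (hzb : ∀ k, zb k = z k - γ • F (z k))
    (hz : ∀ k, z (k + 1) = z k - γ • F (zb k)) :
    ∀ k : ℕ,
      ‖F (z (k + 1))‖ ^ 2 ≤ ‖F (z k)‖ ^ 2 - (1 - γ ^ 2 * L ^ 2) * ‖F (z k) - F (zb k)‖ ^ 2 :=
  stmt1_general F L γ hmono hlip hγ z zb hzb hz
end

section
/- Let F : H → H be monotone and L-Lipschitz on a real Hilbert space, γ ∈ (0, 1/L), z⋆ ∈ H with F(z⋆) = 0, and consider the extragradient iteration z̄ᵏ = zᵏ - γ F(zᵏ), zᵏ⁺¹ = zᵏ - γ F(z̄ᵏ). Then for each k ∈ ℕ, ‖F(zᵏ)‖² ≤ ‖z⁰ - z⋆‖² / (γ²(1 - γ²L²)(k + 1)). -/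
open scoped RealInnerProductSpace

/-!
Each extragradient step decreases `‖z - z⋆‖²` by at least `γ²(1 - γ²L²)‖F z‖²`, while the
residual `‖F zᵏ‖` is nonincreasing along the iteration. Summing the first estimate over
`k + 1` steps and bounding every residual below by the last one gives the `O(1/k)` rate.
-/

def extragradientStep {H : Type*} [AddCommGroup H] [Module ℝ H] (F : H → H) (γ : ℝ) (z : H) :
    H :=
  z - γ • F (z - γ • F z)

theorem add_one_mul_le_of_antitone_of_le_sub {d e : ℕ → ℝ} {c : ℝ} (hc : 0 ≤ c)
    (hd : ∀ k, 0 ≤ d k) (he : Antitone e) (hde : ∀ k, d (k + 1) ≤ d k - c * e k) (k : ℕ) :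
    (k + 1) * (c * e k) ≤ d 0 := by
  have telescope : ∀ k : ℕ, (k + 1) * (c * e k) + d (k + 1) ≤ d 0 := by
    intro k
    induction k with
    | zero =>
      norm_num
      linarith [hde 0]
    | succ n ih =>
      have hce : (n + 1 : ℝ) * (c * e (n + 1)) ≤ (n + 1) * (c * e n) :=
        mul_le_mul_of_nonneg_left (mul_le_mul_of_nonneg_left (he n.le_succ) hc) (by positivity)
      push_cast
      linarith [hde (n + 1)]
  linarith [telescope k, hd (k + 1)]

section Extragradient

variable {H : Type*} [NormedAddCommGroup H] [InnerProductSpace ℝ H] {F : H → H} {L γ : ℝ}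

theorem norm_extragradientStep_sub_sq_le (hmono : ∀ x y : H, 0 ≤ ⟪F x - F y, x - y⟫)
    (hlip : ∀ x y : H, ‖F x - F y‖ ≤ L * ‖x - y‖) (hγ : 0 ≤ γ) {zstar : H}
    (hzstar : F zstar = 0) (x : H) :
    ‖extragradientStep F γ x - zstar‖ ^ 2 ≤
      ‖x - zstar‖ ^ 2 - γ ^ 2 * (1 - γ ^ 2 * L ^ 2) * ‖F x‖ ^ 2 := by
  set a := F x
  set b := F (x - γ • a)
  have hmon : γ * ⟪b, a⟫ ≤ ⟪b, x - zstar⟫ := by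
    have h := hmono (x - γ • a) zstar
    rw [hzstar, sub_zero, sub_right_comm, inner_sub_right, real_inner_smul_right] at h
    linarith
  have hba : ‖b - a‖ ^ 2 ≤ (γ * L) ^ 2 * ‖a‖ ^ 2 := by
    have h := hlip (x - γ • a) x
    rw [sub_sub_cancel_left, norm_neg, norm_smul, Real.norm_of_nonneg hγ] at h
    calc ‖b - a‖ ^ 2 ≤ (L * (γ * ‖a‖)) ^ 2 := pow_le_pow_left₀ (norm_nonneg _) h 2
      _ = (γ * L) ^ 2 * ‖a‖ ^ 2 := by ring
  calc ‖extragradientStep F γ x - zstar‖ ^ 2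
      = ‖x - zstar‖ ^ 2 - 2 * γ * ⟪b, x - zstar⟫ + γ ^ 2 * ‖b‖ ^ 2 := by
        rw [extragradientStep, sub_right_comm, norm_sub_sq_real, real_inner_smul_right,
          real_inner_comm, norm_smul, Real.norm_of_nonneg hγ]
        ring
    _ ≤ ‖x - zstar‖ ^ 2 + γ ^ 2 * (‖b - a‖ ^ 2 - ‖a‖ ^ 2) := by
        rw [norm_sub_sq_real b a]
        nlinarith [mul_le_mul_of_nonneg_left hmon hγ]
    _ ≤ ‖x - zstar‖ ^ 2 - γ ^ 2 * (1 - γ ^ 2 * L ^ 2) * ‖a‖ ^ 2 := by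
        nlinarith [mul_le_mul_of_nonneg_left hba (sq_nonneg γ)]

theorem norm_apply_extragradientStep_le (hmono : ∀ x y : H, 0 ≤ ⟪F x - F y, x - y⟫)
    (hlip : ∀ x y : H, ‖F x - F y‖ ≤ L * ‖x - y‖) (hγ : 0 < γ) (hγL : γ * L ≤ 1)
    (x : H) :
    ‖F (extragradientStep F γ x)‖ ≤ ‖F x‖ := by
  set a := F x
  set b := F (x - γ • a)
  set c := F (extragradientStep F γ x)
  have hmon : ⟪c, b⟫ ≤ ⟪a, b⟫ := by
    have h := hmono (extragradientStep F γ x) x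
    have hdiff : extragradientStep F γ x - x = -(γ • b) := sub_sub_cancel_left _ _
    rw [hdiff, inner_neg_right, real_inner_smul_right, inner_sub_left] at h
    nlinarith
  have hcb : ‖c - b‖ ≤ ‖a - b‖ := by
    have h := hlip (extragradientStep F γ x) (x - γ • a)
    have hdiff : extragradientStep F γ x - (x - γ • a) = γ • (a - b) := by
      rw [extragradientStep, smul_sub]; abel
    rw [hdiff, norm_smul, Real.norm_of_nonneg hγ.le] at h
    nlinarith [norm_nonneg (a - b)]
  have hsq : ‖c - b‖ ^ 2 ≤ ‖a - b‖ ^ 2 := pow_le_pow_left₀ (norm_nonneg _) hcb 2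
  rw [norm_sub_sq_real, norm_sub_sq_real] at hsq
  exact (pow_le_pow_iff_left₀ (norm_nonneg _) (norm_nonneg _) two_ne_zero).mp (by linarith)

end Extragradient

theorem stmt2_general {H : Type*} [NormedAddCommGroup H] [InnerProductSpace ℝ H]
    (F : H → H) (L γ : ℝ)
    (hmono : ∀ x y : H, 0 ≤ ⟪F x - F y, x - y⟫)
    (hlip : ∀ x y : H, ‖F x - F y‖ ≤ L * ‖x - y‖)
    (hγ0 : 0 < γ) (hγ1 : γ < 1 / L)
    (zstar : H) (hzstar : F zstar = 0)
    (z zb : ℕ → H)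
    (hzb : ∀ k, zb k = z k - γ • F (z k))
    (hz : ∀ k, z (k + 1) = z k - γ • F (zb k)) :
    ∀ k : ℕ,
      ‖F (z k)‖ ^ 2 ≤ ‖z 0 - zstar‖ ^ 2 / (γ ^ 2 * (1 - γ ^ 2 * L ^ 2) * (k + 1)) := by
  have hL : 0 < L := one_div_pos.mp (hγ0.trans hγ1)
  have hγL : γ * L < 1 := (lt_div_iff₀ hL).mp hγ1
  have hc : 0 < γ ^ 2 * (1 - γ ^ 2 * L ^ 2) :=
    mul_pos (pow_pos hγ0 2) (by nlinarith [mul_pos hγ0 hL])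
  have hstep : ∀ k, z (k + 1) = extragradientStep F γ (z k) := fun k => by
    rw [hz, hzb, extragradientStep]
  have hres : Antitone fun k => ‖F (z k)‖ ^ 2 := antitone_nat_of_succ_le fun k => by
    rw [hstep]
    exact pow_le_pow_left₀ (norm_nonneg _)
      (norm_apply_extragradientStep_le hmono hlip hγ0 hγL.le _) 2
  have hdist : ∀ k, ‖z (k + 1) - zstar‖ ^ 2 ≤
      ‖z k - zstar‖ ^ 2 - γ ^ 2 * (1 - γ ^ 2 * L ^ 2) * ‖F (z k)‖ ^ 2 := fun k => by
    rw [hstep]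
    exact norm_extragradientStep_sub_sq_le hmono hlip hγ0.le hzstar _
  intro k
  have key := add_one_mul_le_of_antitone_of_le_sub hc.le (fun k => sq_nonneg ‖z k - zstar‖)
    hres hdist k
  rw [le_div_iff₀ (by positivity)]
  linarith

theorem stmt2 {H : Type*} [NormedAddCommGroup H] [InnerProductSpace ℝ H] [CompleteSpace H]
    (F : H → H) (L γ : ℝ) (hL : 0 < L)
    (hmono : ∀ x y : H, 0 ≤ ⟪F x - F y, x - y⟫)
    (hlip : ∀ x y : H, ‖F x - F y‖ ≤ L * ‖x - y‖)
    (hγ0 : 0 < γ) (hγ1 : γ < 1 / L)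
    (zstar : H) (hzstar : F zstar = 0)
    (z zb : ℕ → H)
    (hzb : ∀ k, zb k = z k - γ • F (z k))
    (hz : ∀ k, z (k + 1) = z k - γ • F (zb k)) :
    ∀ k : ℕ,
      ‖F (z k)‖ ^ 2 ≤ ‖z 0 - zstar‖ ^ 2 / (γ ^ 2 * (1 - γ ^ 2 * L ^ 2) * (k + 1)) :=
  stmt2_general F L γ hmono hlip hγ0 hγ1 zstar hzstar z zb hzb hz
end

section
/- Let z⋆ ∈ zer(F + ∂g), z⁰ ∈ H, δ = ‖z⁰ - z⋆‖ > 0, and define the restricted gap Gap(z) = sup over w ∈ dom ∂g with ‖w - z⋆‖ ≤ δ of (⟨F(w), z - w⟩ + g(z) - g(w)). Then for any z ∈ H, Gap(z) ≤ (δ + ‖z - z⋆‖) · inf_{ξ ∈ ∂g(z)} ‖F(z) + ξ‖. -/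
open scoped RealInnerProductSpace

/-- `g` is proper: finite somewhere and never `⊥`. -/
def IsProperEF {H : Type*} (g : H → EReal) : Prop :=
  (∃ x, g x ≠ ⊤) ∧ ∀ x, g x ≠ ⊥

/-- `g` is convex (extended-real-valued). -/
def IsConvexEF {H : Type*} [NormedAddCommGroup H] [InnerProductSpace ℝ H]
    (g : H → EReal) : Prop :=
  ∀ x y : H, ∀ a b : ℝ, 0 ≤ a → 0 ≤ b → a + b = 1 →
    g (a • x + b • y) ≤ (a : EReal) * g x + (b : EReal) * g y

/-- `ξ` is a subgradient of `g` at `z`, i.e. `ξ ∈ ∂g(z)`. -/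
def InSubdiff {H : Type*} [NormedAddCommGroup H] [InnerProductSpace ℝ H]
    (g : H → EReal) (z ξ : H) : Prop :=
  ∀ y : H, g z + ((⟪ξ, y - z⟫ : ℝ) : EReal) ≤ g y

/-- `p = prox_{γ g}(x)`, i.e. `p` minimizes `g(·) + (1/(2γ))‖x - ·‖²`. -/
def IsProx {H : Type*} [NormedAddCommGroup H] [InnerProductSpace ℝ H]
    (g : H → EReal) (γ : ℝ) (x p : H) : Prop :=
  ∀ y : H, g p + ((1 / (2 * γ) * ‖x - p‖ ^ 2 : ℝ) : EReal) ≤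
    g y + ((1 / (2 * γ) * ‖x - y‖ ^ 2 : ℝ) : EReal)

/-! The subgradient inequality at `z` reduces the claim to the real inequality
`⟪F w, z - w⟫ ≤ ⟪ξ, w - z⟫ + C`. Monotonicity replaces `F w` by `F z`, Cauchy–Schwarz bounds
`⟪F z + ξ, z - w⟫` by `‖F z + ξ‖ ‖z - w‖`, and `‖z - w‖ ≤ δ + ‖z - z⋆‖` since `w` lies in the ball. -/

theorem EReal.coe_add_le_add_coe_of_le {a b c : ℝ} {x y : EReal} (habc : a ≤ b + c)
    (hxy : x + b ≤ y) : (a : EReal) + x ≤ y + c :=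
  calc (a : EReal) + x ≤ ((b + c : ℝ) : EReal) + x := by gcongr
    _ = (x + b) + c := by rw [EReal.coe_add, add_right_comm, add_comm (b : EReal)]
    _ ≤ y + c := by gcongr

section Monotone

variable {H : Type*} [NormedAddCommGroup H] [InnerProductSpace ℝ H]

theorem inner_apply_sub_le_of_monotone {F : H → H} (hmono : ∀ x y : H, 0 ≤ ⟪F x - F y, x - y⟫)
    (z w ξ : H) : ⟪F w, z - w⟫ ≤ ⟪ξ, w - z⟫ + ‖F z + ξ‖ * ‖z - w‖ := by
  have hFzw : ⟪F w, z - w⟫ ≤ ⟪F z, z - w⟫ := by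
    have := hmono z w
    rwa [inner_sub_left, sub_nonneg] at this
  have hCS : ⟪F z + ξ, z - w⟫ ≤ ‖F z + ξ‖ * ‖z - w‖ := real_inner_le_norm _ _
  have hξ_neg : ⟪ξ, w - z⟫ = -⟪ξ, z - w⟫ := by rw [← inner_neg_right, neg_sub]
  rw [inner_add_left] at hCS
  linarith

end Monotone

theorem stmt9_general {H : Type*} [NormedAddCommGroup H] [InnerProductSpace ℝ H]
    (F : H → H)
    (hmono : ∀ x y : H, 0 ≤ ⟪F x - F y, x - y⟫)
    (g : H → EReal)
    (zstar : H)
    (z0 : H) :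
    ∀ z ξ : H, InSubdiff g z ξ →
      ∀ w : H, (∃ η : H, InSubdiff g w η) → ‖w - zstar‖ ≤ ‖z0 - zstar‖ →
        ((⟪F w, z - w⟫ : ℝ) : EReal) + g z ≤
          g w + (((‖z0 - zstar‖ + ‖z - zstar‖) * ‖F z + ξ‖ : ℝ) : EReal) := by
  intro z ξ hξ w _ hw
  refine EReal.coe_add_le_add_coe_of_le ?_ (hξ w)
  have hzw : ‖z - w‖ ≤ ‖z0 - zstar‖ + ‖z - zstar‖ := by
    linarith [norm_sub_le_norm_sub_add_norm_sub z zstar w, norm_sub_rev zstar w]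
  calc ⟪F w, z - w⟫ ≤ ⟪ξ, w - z⟫ + ‖F z + ξ‖ * ‖z - w‖ :=
        inner_apply_sub_le_of_monotone hmono z w ξ
    _ ≤ ⟪ξ, w - z⟫ + (‖z0 - zstar‖ + ‖z - zstar‖) * ‖F z + ξ‖ := by
        rw [mul_comm]; gcongr

theorem stmt9 {H : Type*} [NormedAddCommGroup H] [InnerProductSpace ℝ H] [CompleteSpace H]
    (F : H → H)
    (hmono : ∀ x y : H, 0 ≤ ⟪F x - F y, x - y⟫)
    (g : H → EReal) (hproper : IsProperEF g) (hconv : IsConvexEF g)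
    (hlsc : LowerSemicontinuous g)
    (zstar : H) (hzstar : InSubdiff g zstar (-F zstar))
    (z0 : H) (hδ : 0 < ‖z0 - zstar‖) :
    ∀ z ξ : H, InSubdiff g z ξ →
      ∀ w : H, (∃ η : H, InSubdiff g w η) → ‖w - zstar‖ ≤ ‖z0 - zstar‖ →
        ((⟪F w, z - w⟫ : ℝ) : EReal) + g z ≤
          g w + (((‖z0 - zstar‖ + ‖z - zstar‖) * ‖F z + ξ‖ : ℝ) : EReal) :=
  stmt9_general F hmono g zstar z0
end

section
/- Let F : H → H be monotone, L-Lipschitz, and suppose there exists μ with 0 < μ ≤ L such that ‖F(x) - F(y)‖ ≥ μ‖x - y‖ for all x, y. Suppose a sequence (zᵏ) satisfies, for each k, the descent inequality ‖F(zᵏ⁺¹)‖² ≤ ‖F(zᵏ)‖² - σ(1 - γ²L²)‖F(zᵏ) - F(z̄ᵏ)‖² with z̄ᵏ = zᵏ - γF(zᵏ), where σ ∈ (0,1) and γ ∈ (0, 1/L). Then ‖F(zᵏ⁺¹)‖² ≤ (1 - σγ²μ²(1 - γ²L²))‖F(zᵏ)‖², and the contraction factor lies in (0,1). -/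
open scoped RealInnerProductSpace

/-! Since `zᵏ - z̄ᵏ = γ F(zᵏ)`, the lower Lipschitz bound gives `‖F(zᵏ) - F(z̄ᵏ)‖ ≥ γμ‖F(zᵏ)‖`;
feeding this into the descent inequality turns it into a linear contraction. -/

lemma sq_mul_sq_lt_one_of_lt_one_div {γ L : ℝ} (hL : 0 < L) (hγ0 : 0 ≤ γ) (hγ1 : γ < 1 / L) :
    γ ^ 2 * L ^ 2 < 1 := by
  have hγL : γ * L < 1 := (lt_div_iff₀ hL).mp hγ1
  rw [← mul_pow]
  exact pow_lt_one₀ (by positivity) hγL two_ne_zero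

lemma contraction_factor_mem_Ioo {L μ γ σ : ℝ} (hL : 0 < L) (hμ0 : 0 < μ) (hμL : μ ≤ L)
    (hγ0 : 0 < γ) (hγ1 : γ < 1 / L) (hσ0 : 0 < σ) (hσ1 : σ < 1) :
    1 - σ * γ ^ 2 * μ ^ 2 * (1 - γ ^ 2 * L ^ 2) ∈ Set.Ioo 0 1 := by
  have hγL : γ ^ 2 * L ^ 2 < 1 := sq_mul_sq_lt_one_of_lt_one_div hL hγ0.le hγ1
  have hμL2 : γ ^ 2 * μ ^ 2 ≤ γ ^ 2 * L ^ 2 := by gcongr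
  have hgap : 0 < 1 - γ ^ 2 * L ^ 2 := sub_pos.mpr hγL
  constructor
  · nlinarith [mul_pos (mul_pos (sub_pos.mpr hσ1) (by positivity : 0 < γ ^ 2 * μ ^ 2)) hgap]
  · have : 0 < σ * γ ^ 2 * μ ^ 2 * (1 - γ ^ 2 * L ^ 2) := by positivity
    linarith

lemma mul_norm_le_norm_sub_apply_sub_smul {E : Type*} [NormedAddCommGroup E] [NormedSpace ℝ E]
    {F : E → E} {μ γ : ℝ} (hlow : ∀ x y : E, μ * ‖x - y‖ ≤ ‖F x - F y‖) (hγ : 0 ≤ γ) (x : E) :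
    γ * μ * ‖F x‖ ≤ ‖F x - F (x - γ • F x)‖ := by
  have h := hlow x (x - γ • F x)
  rwa [sub_sub_cancel, norm_smul, Real.norm_of_nonneg hγ, ← mul_assoc, mul_comm μ γ] at h

theorem stmt15_general {H : Type*} [NormedAddCommGroup H] [InnerProductSpace ℝ H]
    (F : H → H) (L μ γ σ : ℝ) (hL : 0 < L)
    (hμ0 : 0 < μ) (hμL : μ ≤ L)
    (hlow : ∀ x y : H, μ * ‖x - y‖ ≤ ‖F x - F y‖)
    (hγ0 : 0 < γ) (hγ1 : γ < 1 / L) (hσ0 : 0 < σ) (hσ1 : σ < 1)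
    (z zb : ℕ → H)
    (hzb : ∀ k, zb k = z k - γ • F (z k))
    (hdescent : ∀ k, ‖F (z (k + 1))‖ ^ 2 ≤
      ‖F (z k)‖ ^ 2 - σ * (1 - γ ^ 2 * L ^ 2) * ‖F (z k) - F (zb k)‖ ^ 2) :
    (0 < 1 - σ * γ ^ 2 * μ ^ 2 * (1 - γ ^ 2 * L ^ 2)) ∧
      (1 - σ * γ ^ 2 * μ ^ 2 * (1 - γ ^ 2 * L ^ 2) < 1) ∧
      ∀ k : ℕ, ‖F (z (k + 1))‖ ^ 2 ≤
        (1 - σ * γ ^ 2 * μ ^ 2 * (1 - γ ^ 2 * L ^ 2)) * ‖F (z k)‖ ^ 2 := by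
  obtain ⟨hpos, hlt⟩ := contraction_factor_mem_Ioo hL hμ0 hμL hγ0 hγ1 hσ0 hσ1
  refine ⟨hpos, hlt, fun k => ?_⟩
  have hweight : 0 ≤ σ * (1 - γ ^ 2 * L ^ 2) :=
    mul_nonneg hσ0.le (sub_nonneg.mpr (sq_mul_sq_lt_one_of_lt_one_div hL hγ0.le hγ1).le)
  have hstep : γ * μ * ‖F (z k)‖ ≤ ‖F (z k) - F (zb k)‖ :=
    hzb k ▸ mul_norm_le_norm_sub_apply_sub_smul hlow hγ0.le (z k)
  calc ‖F (z (k + 1))‖ ^ 2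
      ≤ ‖F (z k)‖ ^ 2 - σ * (1 - γ ^ 2 * L ^ 2) * ‖F (z k) - F (zb k)‖ ^ 2 := hdescent k
    _ ≤ ‖F (z k)‖ ^ 2 - σ * (1 - γ ^ 2 * L ^ 2) * (γ * μ * ‖F (z k)‖) ^ 2 := by gcongr
    _ = (1 - σ * γ ^ 2 * μ ^ 2 * (1 - γ ^ 2 * L ^ 2)) * ‖F (z k)‖ ^ 2 := by ring

theorem stmt15 {H : Type*} [NormedAddCommGroup H] [InnerProductSpace ℝ H] [CompleteSpace H]
    (F : H → H) (L μ γ σ : ℝ) (hL : 0 < L)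
    (hmono : ∀ x y : H, 0 ≤ ⟪F x - F y, x - y⟫)
    (hlip : ∀ x y : H, ‖F x - F y‖ ≤ L * ‖x - y‖)
    (hμ0 : 0 < μ) (hμL : μ ≤ L)
    (hlow : ∀ x y : H, μ * ‖x - y‖ ≤ ‖F x - F y‖)
    (hγ0 : 0 < γ) (hγ1 : γ < 1 / L) (hσ0 : 0 < σ) (hσ1 : σ < 1)
    (z zb : ℕ → H)
    (hzb : ∀ k, zb k = z k - γ • F (z k))
    (hdescent : ∀ k, ‖F (z (k + 1))‖ ^ 2 ≤
      ‖F (z k)‖ ^ 2 - σ * (1 - γ ^ 2 * L ^ 2) * ‖F (z k) - F (zb k)‖ ^ 2) :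
    (0 < 1 - σ * γ ^ 2 * μ ^ 2 * (1 - γ ^ 2 * L ^ 2)) ∧
      (1 - σ * γ ^ 2 * μ ^ 2 * (1 - γ ^ 2 * L ^ 2) < 1) ∧
      ∀ k : ℕ, ‖F (z (k + 1))‖ ^ 2 ≤
        (1 - σ * γ ^ 2 * μ ^ 2 * (1 - γ ^ 2 * L ^ 2)) * ‖F (z k)‖ ^ 2 :=
  stmt15_general F L μ γ σ hL hμ0 hμL hlow hγ0 hγ1 hσ0 hσ1 z zb hzb hdescent
end

section
/- Let F : H → H be monotone, continuously Fréchet differentiable, with DF(z⋆) left invertible at a zero z⋆ of F. Suppose (zᵏ) → z⋆ strongly and dᵏ solves (rₖ I + DF(zᵏ)) dᵏ = -F(zᵏ) for some rₖ > 0. Then there exist constants c > 0 and K ∈ ℕ such that ‖dᵏ‖ ≤ (1/c)‖F(zᵏ)‖ for all k ≥ K. -/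
open scoped RealInnerProductSpace
open Filter

/-!
Along a line, a monotone map has monotone scalar component `t ↦ ⟪F (x + t • v), v⟫`, so its
derivative is positive semidefinite. Pairing `r • d + DF(z) d = -F(z)` with this gives
`‖DF(z) d‖ ≤ ‖F(z)‖`, while for `z` near `z⋆` the derivative `DF(z)` is a small perturbation of
`DF(z⋆)` and therefore still bounded below, by `c₁ / 2`.
-/

section Monotone

variable {H : Type*} [NormedAddCommGroup H] [InnerProductSpace ℝ H] {F : H → H}

lemma monotone_inner_apply_add_smul (hmono : ∀ x y : H, 0 ≤ ⟪F x - F y, x - y⟫) (x v : H) :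
    Monotone fun t : ℝ => ⟪F (x + t • v), v⟫ := by
  intro s t hst
  rcases hst.eq_or_lt with rfl | hlt
  · rfl
  have h := hmono (x + t • v) (x + s • v)
  rw [add_sub_add_left_eq_sub, ← sub_smul, real_inner_smul_right, inner_sub_left] at h
  linarith [nonneg_of_mul_nonneg_right h (sub_pos.mpr hlt)]

lemma inner_fderiv_apply_self_nonneg (hmono : ∀ x y : H, 0 ≤ ⟪F x - F y, x - y⟫) {x : H}
    (hF : DifferentiableAt ℝ F x) (v : H) :
    0 ≤ ⟪fderiv ℝ F x v, v⟫ := by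
  have hline : HasDerivAt (fun t : ℝ => x + t • v) v 0 := by
    simpa using ((hasDerivAt_id (0 : ℝ)).smul_const v).const_add x
  have hF' : HasFDerivAt F (fderiv ℝ F x) (x + (0 : ℝ) • v) := by simpa using hF.hasFDerivAt
  have hderiv : HasDerivAt (fun t : ℝ => ⟪F (x + t • v), v⟫) ⟪fderiv ℝ F x v, v⟫ 0 :=
    (hF'.comp_hasDerivAt 0 hline).inner ℝ (hasDerivAt_const 0 v) |>.congr_deriv (by simp)
  rw [← hderiv.deriv]
  exact (monotone_inner_apply_add_smul hmono x v).deriv_nonneg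

end Monotone

lemma norm_le_norm_add_of_inner_nonneg {H : Type*} [NormedAddCommGroup H] [InnerProductSpace ℝ H]
    {a b : H} (h : 0 ≤ ⟪a, b⟫) : ‖b‖ ≤ ‖a + b‖ := by
  have h2 : ‖b‖ ^ 2 ≤ ‖a + b‖ ^ 2 := by
    rw [norm_add_sq_real]
    nlinarith [sq_nonneg ‖a‖]
  exact (pow_le_pow_iff_left₀ (norm_nonneg _) (norm_nonneg _) two_ne_zero).mp h2

lemma ContinuousLinearMap.sub_mul_norm_le_norm_apply_of_norm_sub_le {𝕜 E F : Type*}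
    [NontriviallyNormedField 𝕜] [SeminormedAddCommGroup E] [SeminormedAddCommGroup F]
    [NormedSpace 𝕜 E] [NormedSpace 𝕜 F] {S T : E →L[𝕜] F} {c ε : ℝ} (hT : ∀ v, c * ‖v‖ ≤ ‖T v‖) (hST : ‖S - T‖ ≤ ε) (v : E) :
    (c - ε) * ‖v‖ ≤ ‖S v‖ := by
  have hpert : ‖(S - T) v‖ ≤ ε * ‖v‖ :=
    ((S - T).le_opNorm v).trans (mul_le_mul_of_nonneg_right hST (norm_nonneg v))
  have htri : ‖T v‖ ≤ ‖S v‖ + ‖(S - T) v‖ := by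
    simpa using norm_sub_le (S v) ((S - T) v)
  linarith [hT v]

theorem stmt18_general {H : Type*} [NormedAddCommGroup H] [InnerProductSpace ℝ H]
    (F : H → H)
    (hmono : ∀ x y : H, 0 ≤ ⟪F x - F y, x - y⟫)
    (hdiff : ContDiff ℝ 1 F)
    (zstar : H)
    (c₁ : ℝ) (hc₁ : 0 < c₁)
    (hleft : ∀ v : H, c₁ * ‖v‖ ≤ ‖fderiv ℝ F zstar v‖)
    (z : ℕ → H) (hconv : Filter.Tendsto z Filter.atTop (nhds zstar))
    (r : ℕ → ℝ) (hr : ∀ k, 0 < r k)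
    (d : ℕ → H)
    (hd : ∀ k, r k • d k + fderiv ℝ F (z k) (d k) = -F (z k)) :
    ∃ c : ℝ, 0 < c ∧ ∃ K : ℕ, ∀ k ≥ K, ‖d k‖ ≤ (1 / c) * ‖F (z k)‖ := by
  have hc : 0 < c₁ / 2 := half_pos hc₁
  have hnear : ∀ᶠ k in atTop, ‖fderiv ℝ F (z k) - fderiv ℝ F zstar‖ ≤ c₁ / 2 := by
    have hD := ((hdiff.continuous_fderiv one_ne_zero).tendsto zstar).comp hconv
    filter_upwards [hD.eventually (Metric.closedBall_mem_nhds _ hc)] with k hk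
    simpa [dist_eq_norm] using hk
  obtain ⟨K, hK⟩ := hnear.exists_forall_of_atTop
  refine ⟨c₁ / 2, hc, K, fun k hk => ?_⟩
  have hbelow : c₁ / 2 * ‖d k‖ ≤ ‖fderiv ℝ F (z k) (d k)‖ := by
    simpa [sub_half] using
      ContinuousLinearMap.sub_mul_norm_le_norm_apply_of_norm_sub_le hleft (hK k hk) (d k)
  have hpsd : 0 ≤ ⟪r k • d k, fderiv ℝ F (z k) (d k)⟫ := by
    rw [real_inner_smul_left, real_inner_comm]
    exact mul_nonneg (hr k).le
      (inner_fderiv_apply_self_nonneg hmono (hdiff.differentiable one_ne_zero _) _)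
  have hDF : ‖fderiv ℝ F (z k) (d k)‖ ≤ ‖F (z k)‖ := by
    simpa [hd k] using norm_le_norm_add_of_inner_nonneg hpsd
  rw [one_div_mul_eq_div, le_div_iff₀ hc, mul_comm]
  exact hbelow.trans hDF

theorem stmt18 {H : Type*} [NormedAddCommGroup H] [InnerProductSpace ℝ H] [CompleteSpace H]
    (F : H → H)
    (hmono : ∀ x y : H, 0 ≤ ⟪F x - F y, x - y⟫)
    (hdiff : ContDiff ℝ 1 F)
    (zstar : H) (hzstar : F zstar = 0)
    (c₁ : ℝ) (hc₁ : 0 < c₁)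
    (hleft : ∀ v : H, c₁ * ‖v‖ ≤ ‖fderiv ℝ F zstar v‖)
    (z : ℕ → H) (hconv : Filter.Tendsto z Filter.atTop (nhds zstar))
    (r : ℕ → ℝ) (hr : ∀ k, 0 < r k)
    (d : ℕ → H)
    (hd : ∀ k, r k • d k + fderiv ℝ F (z k) (d k) = -F (z k)) :
    ∃ c : ℝ, 0 < c ∧ ∃ K : ℕ, ∀ k ≥ K, ‖d k‖ ≤ (1 / c) * ‖F (z k)‖ :=
  stmt18_general F hmono hdiff zstar c₁ hc₁ hleft z hconv r hr d hd
end

section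
/- Let (cₖ) be a sequence of positive reals with cₖ → 0 and κ > 0, and suppose ‖zᵏ⁺¹ - zᵏ‖ ≤ κ ∏_{i=1}^{k} cᵢ for all k. If (zᵏ) converges to z⋆, then the sequence μₖ = κ Σ_{ℓ=k}^{∞} ∏_{i=1}^{ℓ} cᵢ satisfies ‖zᵏ - z⋆‖ ≤ μₖ and μₖ/μₖ₋₁ → 0, i.e., (zᵏ) converges to z⋆ R-superlinearly. -/
open scoped RealInnerProductSpace

open Filter Topology

/-!
The increments are dominated by `κ Pₗ` with `Pₗ = ∏_{i ≤ ℓ} cᵢ`, so the distance from `zᵏ` to the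
limit is at most the tail `κ ∑_{ℓ ≥ k} Pₗ`. Since `Pₗ₊₁ = c_{ℓ+1} Pₗ`, the tail starting at `k + 1` is
at most `sup_{i > k} cᵢ` times the tail starting at `k`, and `cᵢ → 0` makes the ratio vanish.
-/

theorem tsum_nat_add_succ_le_mul_tsum {a r : ℕ → ℝ} (ha : ∀ n, 0 ≤ a n) (hs : Summable a)
    (har : ∀ n, a (n + 1) = r n * a n) {ε : ℝ} {k : ℕ} (hr : ∀ n ≥ k, r n ≤ ε) :
    ∑' j, a (k + 1 + j) ≤ ε * ∑' j, a (k + j) := by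
  have htail : ∀ m, Summable fun j => a (m + j) := fun m => hs.comp_injective (add_right_injective m)
  calc ∑' j, a (k + 1 + j) ≤ ∑' j, ε * a (k + j) := by
        refine Summable.tsum_le_tsum (fun j => ?_) (htail (k + 1)) ((htail k).mul_left ε)
        rw [show k + 1 + j = k + j + 1 by omega, har]
        exact mul_le_mul_of_nonneg_right (hr _ (Nat.le_add_right k j)) (ha _)
    _ = ε * ∑' j, a (k + j) := tsum_mul_left

theorem tendsto_tsum_nat_add_succ_div_tsum_nat_add {a r : ℕ → ℝ} (ha : ∀ n, 0 ≤ a n)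
    (hs : Summable a) (har : ∀ n, a (n + 1) = r n * a n) (hr : Tendsto r atTop (𝓝 0)) :
    Tendsto (fun k => (∑' j, a (k + 1 + j)) / ∑' j, a (k + j)) atTop (𝓝 0) := by
  have hnonneg : ∀ k, 0 ≤ ∑' j, a (k + j) := fun k => tsum_nonneg fun j => ha _
  refine tendsto_order.2 ⟨fun b hb => Eventually.of_forall fun k => ?_, fun b hb => ?_⟩
  · exact hb.trans_le (div_nonneg (hnonneg (k + 1)) (hnonneg k))
  · obtain ⟨N, hN⟩ := eventually_atTop.1 ((tendsto_order.1 hr).2 (b / 2) (half_pos hb))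
    refine eventually_atTop.2 ⟨N, fun k hk => ?_⟩
    have hle := tsum_nat_add_succ_le_mul_tsum ha hs har
      (fun n hn => (hN n (hk.trans hn)).le) (ε := b / 2) (k := k)
    calc (∑' j, a (k + 1 + j)) / ∑' j, a (k + j) ≤ b / 2 :=
          div_le_of_le_mul₀ (hnonneg _) (half_pos hb).le hle
      _ < b := half_lt_self hb

theorem prod_Icc_one_succ {M : Type*} [CommMonoid M] (c : ℕ → M) (n : ℕ) :
    ∏ i ∈ Finset.Icc 1 (n + 1), c i = c (n + 1) * ∏ i ∈ Finset.Icc 1 n, c i := by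
  rw [Finset.prod_Icc_succ_top (Nat.le_add_left 1 n), mul_comm]

theorem stmt19_general {H : Type*} [NormedAddCommGroup H]
    (c : ℕ → ℝ) (hc : ∀ k, 0 < c k)
    (hc0 : Filter.Tendsto c Filter.atTop (nhds 0))
    (κ : ℝ) (hκ : 0 < κ)
    (hsum : Summable fun ℓ : ℕ => ∏ i ∈ Finset.Icc 1 ℓ, c i)
    (z : ℕ → H) (zstar : H)
    (hconv : Filter.Tendsto z Filter.atTop (nhds zstar))
    (hstep : ∀ k : ℕ, ‖z (k + 1) - z k‖ ≤ κ * ∏ i ∈ Finset.Icc 1 k, c i)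
    (μ : ℕ → ℝ)
    (hμ : ∀ k : ℕ, μ k = κ * ∑' j : ℕ, ∏ i ∈ Finset.Icc 1 (k + j), c i) :
    (∀ k : ℕ, ‖z k - zstar‖ ≤ μ k) ∧
      Filter.Tendsto (fun k : ℕ => μ (k + 1) / μ k) Filter.atTop (nhds 0) := by
  refine ⟨fun k => ?_, ?_⟩
  · rw [← dist_eq_norm, hμ, ← tsum_mul_left]
    refine dist_le_tsum_of_dist_le_of_tendsto _ (fun n => ?_) (hsum.mul_left κ) hconv k
    rw [dist_comm, dist_eq_norm]
    exact hstep n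
  · have hratio := tendsto_tsum_nat_add_succ_div_tsum_nat_add
      (fun n => Finset.prod_nonneg fun i _ => (hc i).le) hsum (prod_Icc_one_succ c)
      (hc0.comp (tendsto_add_atTop_nat 1))
    refine hratio.congr fun k => ?_
    rw [hμ, hμ, mul_div_mul_left _ _ hκ.ne']

theorem stmt19 {H : Type*} [NormedAddCommGroup H] [InnerProductSpace ℝ H] [CompleteSpace H]
    (c : ℕ → ℝ) (hc : ∀ k, 0 < c k)
    (hc0 : Filter.Tendsto c Filter.atTop (nhds 0))
    (κ : ℝ) (hκ : 0 < κ)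
    (hsum : Summable fun ℓ : ℕ => ∏ i ∈ Finset.Icc 1 ℓ, c i)
    (z : ℕ → H) (zstar : H)
    (hconv : Filter.Tendsto z Filter.atTop (nhds zstar))
    (hstep : ∀ k : ℕ, ‖z (k + 1) - z k‖ ≤ κ * ∏ i ∈ Finset.Icc 1 k, c i)
    (μ : ℕ → ℝ)
    (hμ : ∀ k : ℕ, μ k = κ * ∑' j : ℕ, ∏ i ∈ Finset.Icc 1 (k + j), c i) :
    (∀ k : ℕ, ‖z k - zstar‖ ≤ μ k) ∧
      Filter.Tendsto (fun k : ℕ => μ (k + 1) / μ k) Filter.atTop (nhds 0) :=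
  stmt19_general c hc hc0 κ hκ hsum z zstar hconv hstep μ hμ
end
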